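/- arXiv:2206.01170 — 3 statements merged into one kernel-verified Lean document; each statement's English description precedes it below -/
import Mathlib

section
/- For odd primes p and q with p ≠ q, letting m = (p-1)/2, the sum over a from 1 to m of floor(2*q*a/p) is congruent modulo 2 to the sum over a from 1 to m of floor(q*a/p). -/
/-!
Writing `q * a = p * d + r` with `0 ≤ r < p`, one has `⌊2 q a / p⌋ = 2 d + [r > p / 2]`, so the
two sums differ mod 2 by the number of `a ≤ (p - 1) / 2` whose residue `q * a mod p` exceeds
`p / 2`. By the parity step in Eisenstein's proof of quadratic reciprocity, that number is
congruent to `∑ ⌊q a / p⌋` mod 2 when `q` is odd, and the two sums agree mod 2.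
-/

open Finset

theorem Nat.two_mul_div_of_odd {p : ℕ} (hp : p % 2 = 1) (n : ℕ) :
    2 * n / p = 2 * (n / p) + if p / 2 < n % p then 1 else 0 := by
  have hp0 : 0 < p := by omega
  have hrp : n % p < p := Nat.mod_lt _ hp0
  conv_lhs => rw [← Nat.mod_add_div n p, mul_add, mul_left_comm, Nat.add_mul_div_left _ _ hp0]
  split_ifs with hr
  · rw [Nat.div_eq_of_lt_le (k := 1) (by omega) (by omega)]
    ring
  · rw [Nat.div_eq_of_lt (by omega)]
    ring

theorem ZMod.sum_two_mul_div_modEq_sum_div (p : ℕ) [Fact p.Prime] [hp2 : Fact (p % 2 = 1)]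
    {q : ℕ} (hq2 : q % 2 = 1) (hqp : (q : ZMod p) ≠ 0) :
    ∑ x ∈ Ico 1 (p / 2).succ, 2 * (x * q) / p ≡ ∑ x ∈ Ico 1 (p / 2).succ, x * q / p [MOD 2] := by
  have hcount : ∑ x ∈ Ico 1 (p / 2).succ, (if p / 2 < x * q % p then 1 else 0) =
      #{x ∈ Ico 1 (p / 2).succ | p / 2 < (q * x.cast : ZMod p).val} := by
    simp only [sum_boole, Nat.cast_id, ← Nat.cast_mul, ZMod.val_natCast, mul_comm q]
  calc ∑ x ∈ Ico 1 (p / 2).succ, 2 * (x * q) / p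
      = 2 * ∑ x ∈ Ico 1 (p / 2).succ, x * q / p +
          #{x ∈ Ico 1 (p / 2).succ | p / 2 < (q * x.cast : ZMod p).val} := by
        simp only [Nat.two_mul_div_of_odd hp2.out, sum_add_distrib, mul_sum, hcount]
    _ ≡ 0 + ∑ x ∈ Ico 1 (p / 2).succ, x * q / p [MOD 2] :=
        (Nat.modEq_zero_iff_dvd.mpr (dvd_mul_right 2 _)).add
          (ZMod.eisenstein_lemma_aux p hq2 hqp)
    _ = ∑ x ∈ Ico 1 (p / 2).succ, x * q / p := zero_add _

theorem stmt_2 (p q : ℕ) (hp : p.Prime) (hq : q.Prime) (hp2 : p ≠ 2) (hq2 : q ≠ 2)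
    (hpq : p ≠ q) :
    (∑ a ∈ Finset.Icc 1 ((p - 1) / 2), ⌊(2 * (q : ℚ) * (a : ℚ)) / (p : ℚ)⌋) ≡
      (∑ a ∈ Finset.Icc 1 ((p - 1) / 2), ⌊((q : ℚ) * (a : ℚ)) / (p : ℚ)⌋) [ZMOD 2] := by
  have := Fact.mk hp
  have hp_odd : p % 2 = 1 := Nat.odd_iff.mp (hp.odd_of_ne_two hp2)
  have := Fact.mk hp_odd
  have hqp : (q : ZMod p) ≠ 0 := by
    rwa [Ne, ZMod.natCast_eq_zero_iff, Nat.prime_dvd_prime_iff_eq hp hq]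
  have hrange : Icc 1 ((p - 1) / 2) = Ico 1 (p / 2).succ := by
    rw [Nat.succ_eq_add_one, Ico_add_one_right_eq_Icc, show (p - 1) / 2 = p / 2 by omega]
  have hfloor₂ (a : ℕ) : ⌊2 * (q : ℚ) * a / p⌋ = (2 * (a * q) / p : ℕ) := by
    rw [show 2 * (q : ℚ) * a = (2 * (a * q) : ℕ) by push_cast; ring]
    exact_mod_cast Rat.floor_natCast_div_natCast _ _
  have hfloor₁ (a : ℕ) : ⌊(q : ℚ) * a / p⌋ = (a * q / p : ℕ) := by
    rw [show (q : ℚ) * a = (a * q : ℕ) by push_cast; ring]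
    exact_mod_cast Rat.floor_natCast_div_natCast _ _
  simp only [hrange, hfloor₁, hfloor₂]
  exact_mod_cast ZMod.sum_two_mul_div_modEq_sum_div p (Nat.odd_iff.mp (hq.odd_of_ne_two hq2)) hqp
end

section
/- Gauss's Lemma (floor-sum form): for distinct odd primes p and q, the Legendre symbol (q/p) equals (-1)^M where M = sum over a from 1 to (p-1)/2 of floor(2*q*a/p). -/
/-!
By Gauss's lemma, `(q/p) = (-1)^μ` where `μ` counts the `a ≤ (p-1)/2` whose residue `q a mod p`
exceeds `p/2`. For odd `p`, `⌊2n/p⌋ = 2⌊n/p⌋ + [n mod p > p/2]`, so `M ≡ μ (mod 2)`.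
-/

open Finset

theorem neg_one_pow_sum_two_mul_div_of_odd {ι : Type*} {p : ℕ} (hp : p % 2 = 1)
    (s : Finset ι) (f : ι → ℕ) :
    (-1 : ℤ) ^ (∑ x ∈ s, 2 * f x / p) = (-1) ^ #{x ∈ s | p / 2 < f x % p} := by
  have hsum : ∑ x ∈ s, 2 * f x / p = 2 * ∑ x ∈ s, f x / p + #{x ∈ s | p / 2 < f x % p} := by
    simp_rw [Nat.two_mul_div_of_odd hp, sum_add_distrib, ← mul_sum, card_filter]
  rw [hsum, pow_add, pow_mul]
  simp

theorem Rat.floor_two_mul_natCast_div_natCast (q a p : ℕ) :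
    ⌊2 * (q : ℚ) * a / p⌋ = ((2 * (q * a) / p : ℕ) : ℤ) := by
  rw [show 2 * (q : ℚ) * a = ((2 * (q * a) : ℕ) : ℚ) by push_cast; ring,
    Rat.floor_natCast_div_natCast, Int.natCast_ediv]

theorem stmt_3_general (p q : ℕ) [Fact p.Prime] (hq : q.Prime) (hp2 : p ≠ 2)
    (hpq : p ≠ q) :
    legendreSym p q =
      (((-1 : ℤˣ) ^ (∑ a ∈ Finset.Icc 1 ((p - 1) / 2),
        ⌊(2 * (q : ℚ) * (a : ℚ)) / (p : ℚ)⌋) : ℤˣ) : ℤ) := by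
  have hp : p.Prime := Fact.out
  have hodd : p % 2 = 1 := hp.mod_two_eq_one_iff_ne_two.mpr hp2
  have hq0 : ((q : ℤ) : ZMod p) ≠ 0 := by
    rw [Int.cast_natCast, Ne, ZMod.natCast_eq_zero_iff, Nat.prime_dvd_prime_iff_eq hp hq]
    exact hpq
  have hrange : Icc 1 ((p - 1) / 2) = Ico 1 (p / 2).succ := by
    rw [Nat.succ_eq_add_one, Ico_add_one_right_eq_Icc]
    congr 1
    omega
  have hval (x : ℕ) : (((q : ℤ) : ZMod p) * (x : ZMod p)).val = q * x % p := by
    rw [Int.cast_natCast, ← Nat.cast_mul, ZMod.val_natCast]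
  simp_rw [ZMod.gauss_lemma hp2 hq0, hval, hrange, Rat.floor_two_mul_natCast_div_natCast,
    ← Nat.cast_sum, zpow_natCast, Units.val_pow_eq_pow_val, Units.val_neg, Units.val_one,
    neg_one_pow_sum_two_mul_div_of_odd hodd]

theorem stmt_3 (p q : ℕ) [Fact p.Prime] (hq : q.Prime) (hp2 : p ≠ 2) (hq2 : q ≠ 2)
    (hpq : p ≠ q) :
    legendreSym p q =
      (((-1 : ℤˣ) ^ (∑ a ∈ Finset.Icc 1 ((p - 1) / 2),
        ⌊(2 * (q : ℚ) * (a : ℚ)) / (p : ℚ)⌋) : ℤˣ) : ℤ) :=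
  stmt_3_general p q hq hp2 hpq
end

section
/- For distinct odd primes p and q, the sum over a from 1 to (p-1)/2 of floor(q*a/p) equals the double sum over a from 1 to (p-1)/2 and b from 1 to (q-1)/2 of floor(a/p - b/q + 1). -/
theorem stmt_6 (p q : ℕ) (hp : p.Prime) (hq : q.Prime) (hp2 : p ≠ 2) (hq2 : q ≠ 2)
    (hpq : p ≠ q) :
    ∑ a ∈ Finset.Icc 1 ((p - 1) / 2), ⌊((q : ℚ) * (a : ℚ)) / (p : ℚ)⌋ =
      ∑ a ∈ Finset.Icc 1 ((p - 1) / 2), ∑ b ∈ Finset.Icc 1 ((q - 1) / 2),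
        ⌊(a : ℚ) / (p : ℚ) - (b : ℚ) / (q : ℚ) + 1⌋ := by
  have hp0 : 0 < p := hp.pos
  have hq0 : 0 < q := hq.pos
  have hpQ : (0:ℚ) < (p:ℚ) := by exact_mod_cast hp0
  have hqQ : (0:ℚ) < (q:ℚ) := by exact_mod_cast hq0
  have hpodd : p % 2 = 1 := Nat.odd_iff.mp (hp.odd_of_ne_two hp2)
  have hqodd : q % 2 = 1 := Nat.odd_iff.mp (hq.odd_of_ne_two hq2)
  refine Finset.sum_congr rfl fun a ha => ?_
  rw [Finset.mem_Icc] at ha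
  have hap : 2 * a < p := by omega
  set m := (q - 1) / 2 with hm
  set n := q * a / p with hn
  have hnp : n * p ≤ q * a := Nat.div_mul_le_self _ _
  have hnp2 : q * a < (n + 1) * p := by
    exact (Nat.div_lt_iff_lt_mul hp0).mp (Nat.lt_succ_self n)
  have hne : ∀ b : ℕ, q * a ≠ b * p := by
    intro b hb
    have hpd : p ∣ q * a := ⟨b, by rw [hb]; ring⟩
    rcases (Nat.Prime.dvd_mul hp).mp hpd with h | h
    · exact hpq ((Nat.prime_dvd_prime_iff_eq hp hq).mp h)
    · have := Nat.le_of_dvd (by omega) h; omega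
  have hnm : n ≤ m := by
    have h1 : 2 * n * p < q * p := by
      calc 2 * n * p = 2 * (n * p) := by ring
        _ ≤ 2 * (q * a) := by omega
        _ = q * (2 * a) := by ring
        _ < q * p := mul_lt_mul_of_pos_left hap hq0
    have h2 : 2 * n < q := Nat.lt_of_mul_lt_mul_right h1
    omega
  have key : ∀ b ∈ Finset.Icc 1 m, ⌊(a:ℚ)/(p:ℚ) - (b:ℚ)/(q:ℚ) + 1⌋ = if b ≤ n then 1 else 0 := by
    intro b hb
    rw [Finset.mem_Icc] at hb
    have hbq : 2 * b < q := by omega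
    by_cases hcase : b ≤ n
    · have hlt : b * p < q * a := by
        have h1 : b * p ≤ n * p := Nat.mul_le_mul_right _ hcase
        have := hne b
        omega
      rw [if_pos hcase]
      rw [Int.floor_eq_iff]
      constructor
      · have : (b:ℚ)/(q:ℚ) < (a:ℚ)/(p:ℚ) := by
          rw [div_lt_div_iff₀ hqQ hpQ]
          have : (b * p : ℚ) < (q * a : ℚ) := by exact_mod_cast hlt
          linarith [this]
        push_cast; linarith
      · have h1 : (a:ℚ)/(p:ℚ) < 1 := by
          rw [div_lt_one hpQ]; exact_mod_cast by omega
        have h2 : (0:ℚ) < (b:ℚ)/(q:ℚ) := div_pos (by exact_mod_cast hb.1) hqQ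
        push_cast; linarith
    · have hgt : q * a < b * p := by
        have h1 : (n + 1) * p ≤ b * p := Nat.mul_le_mul_right _ (by omega)
        omega
      rw [if_neg hcase]
      rw [Int.floor_eq_iff]
      constructor
      · have h1 : (b:ℚ)/(q:ℚ) < 1 := by
          rw [div_lt_one hqQ]; exact_mod_cast by omega
        have h2 : (0:ℚ) ≤ (a:ℚ)/(p:ℚ) := by positivity
        push_cast; linarith
      · have : (a:ℚ)/(p:ℚ) < (b:ℚ)/(q:ℚ) := by
          rw [div_lt_div_iff₀ hpQ hqQ]
          have : (q * a : ℚ) < (b * p : ℚ) := by exact_mod_cast hgt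
          linarith [this]
        push_cast; linarith
  rw [Finset.sum_congr rfl key]
  rw [Finset.sum_ite, Finset.sum_const, Finset.sum_const_zero, add_zero]
  have hfilter : Finset.filter (fun b => b ≤ n) (Finset.Icc 1 m) = Finset.Icc 1 n := by
    ext b
    simp only [Finset.mem_filter, Finset.mem_Icc]
    omega
  rw [hfilter, Nat.card_Icc]
  have hfl : ⌊((q:ℚ) * (a:ℚ)) / (p:ℚ)⌋ = (n : ℤ) := by
    rw [Int.floor_eq_iff]
    constructor
    · rw [le_div_iff₀ hpQ]
      exact_mod_cast hnp
    · rw [div_lt_iff₀ hpQ]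
      push_cast
      exact_mod_cast hnp2
  rw [hfl]
  simp
end
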